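/- In the braid group B_4, the word σ1⁻¹ σ1⁻¹ σ2 σ2 σ2 σ1⁻¹ σ3⁻¹ σ2⁻¹ σ2⁻¹ σ2⁻¹ σ3⁻¹ (a braid representative of the knot 11n75) equals the product of the negative bands of its negative band decomposition with band centers {1, 2, 6, 7, 11}, namely σ1⁻¹ · σ1⁻¹ · (σ2³ σ1⁻¹ σ2⁻³) · (σ2³ σ3⁻¹ σ2⁻³) · σ3⁻¹; in particular, this braid is quasinegative. -/

import Mathlib

/-- The Artin relations for the braid group with `m` generators
`σ_1, …, σ_m` (indexed by `Fin m`), i.e. the braid group `B_{m+1}`: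
`σ_i σ_j = σ_j σ_i` for `|i - j| ≥ 2`, and
`σ_i σ_{i+1} σ_i = σ_{i+1} σ_i σ_{i+1}`. -/
def braidRels (m : ℕ) : Set (FreeGroup (Fin m)) :=
  { r | (∃ i j : Fin m, (i : ℕ) + 2 ≤ (j : ℕ) ∧
          r = FreeGroup.of i * FreeGroup.of j * (FreeGroup.of i)⁻¹ * (FreeGroup.of j)⁻¹) ∨
        (∃ i j : Fin m, (i : ℕ) + 1 = (j : ℕ) ∧
          r = FreeGroup.of i * FreeGroup.of j * FreeGroup.of i *
              (FreeGroup.of j)⁻¹ * (FreeGroup.of i)⁻¹ * (FreeGroup.of j)⁻¹) }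

/-- The braid group `B_{m+1}`, presented with `m` Artin generators.
Here index `i : Fin m` corresponds to the Artin generator `σ_{i+1}`. -/
abbrev BraidGrp (m : ℕ) := PresentedGroup (braidRels m)

/-- The Artin generator `σ_{i+1}` of the braid group `B_{m+1}`. -/
def σ {m : ℕ} (i : Fin m) : BraidGrp m := PresentedGroup.of i

/-- A letter of a braid word: a generator index together with a sign
(`true` = the positive generator, `false` = its inverse). -/
abbrev Letter (m : ℕ) := Fin m × Bool

/-- The group element represented by a letter. -/
def letterEl {m : ℕ} (x : Letter m) : BraidGrp m :=
  if x.2 then σ x.1 else (σ x.1)⁻¹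

/-- The group element represented by a braid word. -/
def wordProd {m : ℕ} (w : List (Letter m)) : BraidGrp m :=
  (w.map letterEl).prod

/-- The band of the band decomposition of the word `w` with band centers `S`
(1-based positions) at center `p`: namely `α_p * x_p * α_p⁻¹`, where `x_p` is
the letter of `w` at position `p` and `α_p` is the product, in increasing
order of position, of the letters of `w` at positions `q < p` with `q ∉ S`. -/
def band {m : ℕ} (w : List (Letter m)) (S : List ℕ) (p : ℕ) : BraidGrp m :=
  let α : BraidGrp m :=
    wordProd (((w.zipIdx.map Prod.swap).filter fun qx => decide (qx.1 + 1 < p ∧ qx.1 + 1 ∉ S)).map Prod.snd)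
  match w[p - 1]? with
  | some x => α * letterEl x * α⁻¹
  | none => 1

/-- The product, in increasing order of band center, of the bands of the
band decomposition of the word `w` with band centers `S`. -/
def bandProd {m : ℕ} (w : List (Letter m)) (S : List ℕ) : BraidGrp m :=
  (S.map (band w S)).prod

/-- A positive band in the braid group: a conjugate `α σ_j α⁻¹` of a generator. -/
def IsPositiveBand {m : ℕ} (x : BraidGrp m) : Prop :=
  ∃ (α : BraidGrp m) (j : Fin m), x = α * σ j * α⁻¹

/-- A braid is quasipositive if it is a product of positive bands. -/
def IsQuasipositive {m : ℕ} (x : BraidGrp m) : Prop :=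
  ∃ l : List (BraidGrp m), (∀ b ∈ l, IsPositiveBand b) ∧ x = l.prod

/-- A negative band in the braid group: a conjugate `α σ_j⁻¹ α⁻¹` of the
inverse of a generator. -/
def IsNegativeBand {m : ℕ} (x : BraidGrp m) : Prop :=
  ∃ (α : BraidGrp m) (j : Fin m), x = α * (σ j)⁻¹ * α⁻¹

/-- A braid is quasinegative if it is a product of negative bands. -/
def IsQuasinegative {m : ℕ} (x : BraidGrp m) : Prop :=
  ∃ l : List (BraidGrp m), (∀ b ∈ l, IsNegativeBand b) ∧ x = l.prod

/-- The braid word for the knot `11n75` (letter `(i, true)` is `σ_(i+1)`,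
`(i, false)` is `σ_(i+1)⁻¹`). -/
def theWord : List (Letter 3) :=
  [(0, false), (0, false), (1, true), (1, true), (1, true), (0, false), (2, false), (1, false), (1, false), (1, false), (2, false)]

/-- The band centers. -/
def theCenters : List ℕ := [1, 2, 6, 7, 11]

/-! For any word `w` and strictly increasing band centers `S`, the band products telescope:
`bandProd w S = wordProd w * (wordProd v)⁻¹`, where `v` is the subword of `w` formed by the
letters off the centers. This is an identity in the free group. For `11n75` that subword is
`σ₂³ σ₂⁻³`, so the word equals its band product, and since every center carries an inverse
generator, every band is negative. -/

theorem List.filter_le_succ_of_pairwise_lt {S : List ℕ} (hS : S.Pairwise (· < ·)) {k : ℕ}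
    (hk : k + 1 ∈ S) : S.filter (· ≤ k + 1) = S.filter (· ≤ k) ++ [k + 1] := by
  induction S with
  | nil => simp at hk
  | cons a S ih =>
    obtain ⟨ha, hS⟩ := List.pairwise_cons.1 hS
    rcases lt_trichotomy a (k + 1) with hlt | rfl | hgt
    · have hak : a ≤ k := by omega
      simp [hlt.le, hak, ih hS (by simpa [hlt.ne'] using hk)]
    · have h1 : S.filter (· ≤ k + 1) = [] :=
        List.filter_eq_nil_iff.2 fun b hb => by
          have := ha b hb; simp only [decide_eq_true_eq]; omega
      have h2 : S.filter (· ≤ k) = [] :=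
        List.filter_eq_nil_iff.2 fun b hb => by
          have := ha b hb; simp only [decide_eq_true_eq]; omega
      simp [h1, h2]
    · have := ha _ (by simpa [hgt.ne] using hk)
      omega

section BandDecomposition

variable {m : ℕ}

def offCenterLetters (w : List (Letter m)) (S : List ℕ) : List (Letter m) :=
  ((w.zipIdx.map Prod.swap).filter fun qx => decide (qx.1 + 1 ∉ S)).map Prod.snd

theorem wordProd_append (u v : List (Letter m)) :
    wordProd (u ++ v) = wordProd u * wordProd v := by
  simp [wordProd]

theorem wordProd_singleton (x : Letter m) : wordProd [x] = letterEl x := by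
  simp [wordProd]

theorem offCenterLetters_append_singleton (w : List (Letter m)) (S : List ℕ) (x : Letter m) :
    offCenterLetters (w ++ [x]) S =
      offCenterLetters w S ++ if w.length + 1 ∈ S then [] else [x] := by
  simp only [offCenterLetters, List.zipIdx_append, List.map_append, List.filter_append]
  split_ifs <;> simp_all

theorem band_eq_of_getElem? {w : List (Letter m)} {S : List ℕ} {p : ℕ} {x : Letter m}
    (hx : w[p - 1]? = some x) :
    band w S p = wordProd (offCenterLetters (w.take (p - 1)) S) * letterEl x *
      (wordProd (offCenterLetters (w.take (p - 1)) S))⁻¹ := by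
  have hα : ((w.zipIdx.map Prod.swap).filter fun qx => decide (qx.1 + 1 < p ∧ qx.1 + 1 ∉ S)).map
      Prod.snd = offCenterLetters (w.take (p - 1)) S := by
    have hdrop : (((w.drop (p - 1)).zipIdx (0 + (w.take (p - 1)).length)).map Prod.swap).filter
        (fun qx => decide (qx.1 + 1 < p ∧ qx.1 + 1 ∉ S)) = [] := by
      refine List.filter_eq_nil_iff.2 fun qx hq => ?_
      obtain ⟨⟨y, q⟩, hmem, rfl⟩ := List.mem_map.1 hq
      have hbounds := List.mem_zipIdx hmem
      simp only [List.length_take, List.length_drop] at hbounds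
      simp only [Prod.swap_prod_mk, decide_eq_true_eq, not_and]
      omega
    conv_lhs => rw [← List.take_append_drop (p - 1) w]
    rw [List.zipIdx_append, List.map_append, List.filter_append, hdrop, List.append_nil,
      offCenterLetters]
    congr 1
    refine List.filter_congr fun qx hq => ?_
    obtain ⟨⟨y, q⟩, hmem, rfl⟩ := List.mem_map.1 hq
    have hq : q + 1 < p := by
      have hbound := (List.mem_zipIdx' hmem).1
      simp only [List.length_take] at hbound
      omega
    simp [hq]
  simp only [band, hx, hα]

theorem prod_map_band_filter_le {w : List (Letter m)} {S : List ℕ} (hS : S.Pairwise (· < ·))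
    (h0 : 0 ∉ S) {k : ℕ} (hk : k ≤ w.length) :
    ((S.filter (· ≤ k)).map (band w S)).prod =
      wordProd (w.take k) * (wordProd (offCenterLetters (w.take k) S))⁻¹ := by
  induction k with
  | zero =>
    have hnil : S.filter (· ≤ 0) = [] :=
      List.filter_eq_nil_iff.2 fun p hp => by
        have hp0 : p ≠ 0 := by rintro rfl; exact h0 hp
        simpa
    rw [hnil]
    simp [wordProd, offCenterLetters]
  | succ k ih =>
    have hkw : k < w.length := hk
    have htake : w.take (k + 1) = w.take k ++ [w[k]] := by
      rw [List.take_add_one, List.getElem?_eq_getElem hkw, Option.toList_some]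
    have hband : band w S (k + 1) = wordProd (offCenterLetters (w.take k) S) * letterEl w[k] *
        (wordProd (offCenterLetters (w.take k) S))⁻¹ :=
      band_eq_of_getElem? (by simp [hkw])
    rw [htake, offCenterLetters_append_singleton, List.length_take_of_le hkw.le, wordProd_append,
      wordProd_singleton]
    by_cases hc : k + 1 ∈ S
    · rw [List.filter_le_succ_of_pairwise_lt hS hc, List.map_append, List.prod_append, ih hkw.le,
        if_pos hc, List.append_nil]
      simp only [List.map_cons, List.map_nil, List.prod_cons, List.prod_nil, mul_one, hband]
      group
    · have hfilter : S.filter (· ≤ k + 1) = S.filter (· ≤ k) :=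
        List.filter_congr fun p hp => by
          have hpk : p ≠ k + 1 := by rintro rfl; exact hc hp
          simp only [decide_eq_decide]
          omega
      rw [hfilter, ih hkw.le, if_neg hc, wordProd_append, wordProd_singleton]
      group

-- Positions are 1-based, yet `band w S 0` is not trivial: it reads the letter at `0 - 1 = 0`.
theorem bandProd_eq_wordProd_mul_inv {w : List (Letter m)} {S : List ℕ}
    (hS : S.Pairwise (· < ·)) (hS_mem : ∀ p ∈ S, 0 < p ∧ p ≤ w.length) :
    bandProd w S = wordProd w * (wordProd (offCenterLetters w S))⁻¹ := by
  have := prod_map_band_filter_le (w := w) hS (fun h => (hS_mem 0 h).1.false) le_rfl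
  rwa [List.filter_eq_self.2 fun p hp => by simpa using (hS_mem p hp).2, List.take_length] at this

theorem wordProd_eq_bandProd {w : List (Letter m)} {S : List ℕ}
    (hS : S.Pairwise (· < ·)) (hS_mem : ∀ p ∈ S, 0 < p ∧ p ≤ w.length)
    (hoff : wordProd (offCenterLetters w S) = 1) : wordProd w = bandProd w S := by
  rw [bandProd_eq_wordProd_mul_inv hS hS_mem, hoff, inv_one, mul_one]

theorem isNegativeBand_band {w : List (Letter m)} {S : List ℕ} {p : ℕ} {j : Fin m}
    (hx : w[p - 1]? = some (j, false)) : IsNegativeBand (band w S p) :=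
  ⟨_, j, band_eq_of_getElem? hx⟩

theorem isQuasinegative_bandProd {w : List (Letter m)} {S : List ℕ}
    (hS : ∀ p ∈ S, ∃ j, w[p - 1]? = some (j, false)) : IsQuasinegative (bandProd w S) := by
  refine ⟨S.map (band w S), fun b hb => ?_, rfl⟩
  obtain ⟨p, hp, rfl⟩ := List.mem_map.1 hb
  obtain ⟨j, hj⟩ := hS p hp
  exact isNegativeBand_band hj

end BandDecomposition

theorem offCenterLetters_theWord :
    offCenterLetters theWord theCenters =
      [(1, true), (1, true), (1, true), (1, false), (1, false), (1, false)] := by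
  decide

theorem wordProd_theWord_eq_bandProd : wordProd theWord = bandProd theWord theCenters :=
  wordProd_eq_bandProd (by decide) (by decide) (by
    rw [offCenterLetters_theWord]
    simp [wordProd, letterEl])

theorem bandProd_theWord :
    bandProd theWord theCenters =
      (σ 0)⁻¹ * (σ 0)⁻¹ * ((σ 1) ^ 3 * (σ 0)⁻¹ * ((σ 1) ^ 3)⁻¹) *
        ((σ 1) ^ 3 * (σ 2)⁻¹ * ((σ 1) ^ 3)⁻¹) * (σ 2)⁻¹ := by
  have hα₁ : offCenterLetters (theWord.take 0) theCenters = [] := rfl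
  have hα₂ : offCenterLetters (theWord.take 1) theCenters = [] := by decide
  have hα₆ : offCenterLetters (theWord.take 5) theCenters = [(1, true), (1, true), (1, true)] := by
    decide
  have hα₇ : offCenterLetters (theWord.take 6) theCenters = [(1, true), (1, true), (1, true)] := by
    decide
  have hα₁₁ : offCenterLetters (theWord.take 10) theCenters =
      offCenterLetters theWord theCenters := by
    decide
  rw [bandProd, show theCenters.map (band theWord theCenters) = [1, 2, 6, 7, 11].map
      (band theWord theCenters) from rfl, List.map_cons, List.map_cons, List.map_cons,
    List.map_cons, List.map_cons, List.map_nil, band_eq_of_getElem? (p := 1) rfl,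
    band_eq_of_getElem? (p := 2) rfl, band_eq_of_getElem? (p := 6) rfl,
    band_eq_of_getElem? (p := 7) rfl, band_eq_of_getElem? (p := 11) rfl]
  simp only [Nat.add_one_sub_one, hα₁, hα₂, hα₆, hα₇, hα₁₁, offCenterLetters_theWord, wordProd,
    letterEl, List.map_cons, List.map_nil, List.prod_cons, List.prod_nil, pow_three,
    Bool.false_eq_true, if_true, if_false]
  group

/-- The braid representative of `11n75` equals the product of the bands of its
band decomposition with the given band centers; in particular it is quasinegative. -/
theorem knot_11n75_quasinegative :
    wordProd theWord = bandProd theWord theCenters ∧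
      bandProd theWord theCenters =
        (σ 0)⁻¹ * (σ 0)⁻¹ * ((σ 1) ^ 3 * (σ 0)⁻¹ * ((σ 1) ^ 3)⁻¹) * ((σ 1) ^ 3 * (σ 2)⁻¹ * ((σ 1) ^ 3)⁻¹) * (σ 2)⁻¹ ∧
      IsQuasinegative (wordProd theWord) :=
  ⟨wordProd_theWord_eq_bandProd, bandProd_theWord,
    wordProd_theWord_eq_bandProd ▸ isQuasinegative_bandProd (by decide)⟩
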